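/- Let a,b,c,d be Hamilton quaternions such that M = [[a,b],[c,d]] satisfies M·σ̂(M) = σ̂(M)·M = 1. Then for every Hamilton quaternion z with π_k(z) > 0, one has c·z + d ≠ 0 and π_k((a·z + b)·(c·z + d)⁻¹) = π_k(z) / nrm(c·z + d). -/

import Mathlib

/-- The orthogonal involution `♯` on the Hamilton quaternions negating the `k`-component. -/
def qSharp (q : Quaternion ℝ) : Quaternion ℝ := ⟨q.re, q.imI, q.imJ, -q.imK⟩

/-- The twisted adjugate involution `σ̂` on 2×2 quaternionic matrices. -/
def hatSigma (M : Matrix (Fin 2) (Fin 2) (Quaternion ℝ)) :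
    Matrix (Fin 2) (Fin 2) (Quaternion ℝ) :=
  !![qSharp (M 1 1), -qSharp (M 0 1); -qSharp (M 1 0), qSharp (M 0 0)]

/-!
Write `u = cz + d` and `v = az + b`. The relation `σ̂(M)·M = 1` says exactly that
`u^♯ v - v^♯ u = z - z^♯` for every `z`, and `z - z^♯ = 2 π_k(z) k`; in particular `u ≠ 0`
as soon as `π_k(z) ≠ 0`. Since `♯` is an anti-automorphism and `u^♯ k u = nrm(u) k`,
the element `w = v u⁻¹` satisfies `u^♯ (w - w^♯) u = nrm(u) (w - w^♯)`, while the left side is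
`u^♯ v - v^♯ u`. Comparing `k`-components gives `nrm(u) π_k(w) = π_k(z)`.
-/

namespace Quaternion

@[simp] lemma qSharp_re (q : ℍ[ℝ]) : (qSharp q).re = q.re := rfl
@[simp] lemma qSharp_imI (q : ℍ[ℝ]) : (qSharp q).imI = q.imI := rfl
@[simp] lemma qSharp_imJ (q : ℍ[ℝ]) : (qSharp q).imJ = q.imJ := rfl
@[simp] lemma qSharp_imK (q : ℍ[ℝ]) : (qSharp q).imK = -q.imK := rfl

lemma qSharp_add (p q : ℍ[ℝ]) : qSharp (p + q) = qSharp p + qSharp q := by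
  ext <;> simp [add_comm]

lemma qSharp_mul (p q : ℍ[ℝ]) : qSharp (p * q) = qSharp q * qSharp p := by
  ext <;> simp <;> ring

lemma qSharp_mul_inv {u : ℍ[ℝ]} (hu : u ≠ 0) : qSharp u * qSharp u⁻¹ = 1 := by
  rw [← qSharp_mul, inv_mul_cancel₀ hu]
  ext <;> simp

@[simp] lemma imK_sub_qSharp (q : ℍ[ℝ]) : (q - qSharp q).imK = 2 * q.imK := by
  simp; ring

lemma qSharp_mul_sub_qSharp_mul (u q : ℍ[ℝ]) :
    qSharp u * (q - qSharp q) * u = normSq u • (q - qSharp q) := by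
  ext <;> simp [normSq_def'] <;> ring

lemma normSq_smul_mul_inv_sub_qSharp {u : ℍ[ℝ]} (hu : u ≠ 0) (v : ℍ[ℝ]) :
    normSq u • (v * u⁻¹ - qSharp (v * u⁻¹)) = qSharp u * v - qSharp v * u := by
  calc normSq u • (v * u⁻¹ - qSharp (v * u⁻¹))
      = qSharp u * (v * u⁻¹ - qSharp (v * u⁻¹)) * u := (qSharp_mul_sub_qSharp_mul _ _).symm
    _ = qSharp u * v * (u⁻¹ * u) - (qSharp u * qSharp u⁻¹) * (qSharp v * u) := by
        rw [qSharp_mul]; noncomm_ring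
    _ = qSharp u * v - qSharp v * u := by
        rw [inv_mul_cancel₀ hu, qSharp_mul_inv hu, mul_one, one_mul]

end Quaternion

open Quaternion

lemma hatSigma_mul_eq_one_iff (a b c d : ℍ[ℝ]) :
    hatSigma !![a, b; c, d] * !![a, b; c, d] = 1 ↔
      qSharp d * a - qSharp b * c = 1 ∧ qSharp d * b - qSharp b * d = 0 ∧
        qSharp a * c - qSharp c * a = 0 ∧ qSharp a * d - qSharp c * b = 1 := by
  simp [← Matrix.ext_iff, Fin.forall_fin_two, hatSigma, Matrix.one_apply, neg_add_eq_sub,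
    ← sub_eq_add_neg, and_assoc]

lemma qSharp_mul_sub_qSharp_mul_of_hatSigma_mul_eq_one {a b c d : ℍ[ℝ]}
    (h : hatSigma !![a, b; c, d] * !![a, b; c, d] = 1) (z : ℍ[ℝ]) :
    qSharp (c * z + d) * (a * z + b) - qSharp (a * z + b) * (c * z + d) = z - qSharp z := by
  obtain ⟨h00, h01, h10, h11⟩ := (hatSigma_mul_eq_one_iff a b c d).1 h
  calc qSharp (c * z + d) * (a * z + b) - qSharp (a * z + b) * (c * z + d)
      = qSharp z * -(qSharp a * c - qSharp c * a) * z + qSharp z * -(qSharp a * d - qSharp c * b)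
          + (qSharp d * a - qSharp b * c) * z + (qSharp d * b - qSharp b * d) := by
        simp only [qSharp_add, qSharp_mul]; noncomm_ring
    _ = z - qSharp z := by
        rw [h00, h01, h10, h11]; noncomm_ring

/-- for `M = [[a,b],[c,d]] ∈ SL^♯(2,ℍ)` and `z` with `π_k(z) > 0`,
`c·z + d ≠ 0` and `π_k(M.z) = π_k(z) / nrm(c·z + d)`. -/
theorem imK_of_moebius (a b c d : Quaternion ℝ)
    (h : !![a, b; c, d] * hatSigma !![a, b; c, d] = 1 ∧
         hatSigma !![a, b; c, d] * !![a, b; c, d] = 1) :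
    ∀ z : Quaternion ℝ, 0 < z.imK →
      c * z + d ≠ 0 ∧
      ((a * z + b) * (c * z + d)⁻¹).imK = z.imK / Quaternion.normSq (c * z + d) := by
  intro z hz
  have key := qSharp_mul_sub_qSharp_mul_of_hatSigma_mul_eq_one h.2 z
  have hu : c * z + d ≠ 0 := by
    intro h0
    have : (z - qSharp z).imK = 0 := by rw [← key, h0]; simp
    rw [imK_sub_qSharp] at this
    linarith
  refine ⟨hu, ?_⟩
  have hw := congrArg QuaternionAlgebra.imK
    ((normSq_smul_mul_inv_sub_qSharp hu (a * z + b)).trans key)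
  simp only [imK_smul, imK_sub_qSharp, smul_eq_mul] at hw
  rw [eq_div_iff (normSq_ne_zero.2 hu)]
  linarith
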